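/- arXiv:1103.0264 — 2 statements merged into one kernel-verified Lean document; each statement's English description precedes it below -/
import Mathlib

section
/- Fix real numbers t₀ and N with 2 < t₀ < 3 ≤ N, and set C_{t₀} = (1 − q(t₀)^{−2})^{−1}, where q(s) = (s + √(s² − 4))/2. Then C_{t₀} > 0, and for every real t with t₀ ≤ t ≤ N and every natural number n ≥ 0: 0 < u_n(t)/u_n(N) ≤ C_{t₀} · (t/N)^n. -/
/-- The dilated Chebyshev polynomials of the second kind:
`u 0 x = 1`, `u 1 x = x`, `x * u n x = u (n+1) x + u (n-1) x`. -/
noncomputable def chebU : ℕ → ℝ → ℝ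
  | 0 => fun _ => 1
  | 1 => fun x => x
  | n + 2 => fun x => x * chebU (n + 1) x - chebU n x

/-- `qf s = (s + √(s² − 4)) / 2`. -/
noncomputable def qf (s : ℝ) : ℝ := (s + Real.sqrt (s ^ 2 - 4)) / 2

lemma sq_sub_nonneg {s : ℝ} (hs : 2 < s) : 0 ≤ s ^ 2 - 4 := by nlinarith

lemma qf_gt_one {s : ℝ} (hs : 2 < s) : 1 < qf s := by
  have h := Real.sqrt_nonneg (s ^ 2 - 4)
  unfold qf; linarith

lemma qf_inv {s : ℝ} (hs : 2 < s) : (qf s)⁻¹ = (s - Real.sqrt (s ^ 2 - 4)) / 2 := by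
  have h := Real.sq_sqrt (sq_sub_nonneg hs)
  refine inv_eq_of_mul_eq_one_right ?_
  unfold qf; nlinarith [h]

lemma qf_add_inv {s : ℝ} (hs : 2 < s) : qf s + (qf s)⁻¹ = s := by
  rw [qf_inv hs]; unfold qf; ring

lemma qf_inv_lt_one {s : ℝ} (hs : 2 < s) : (qf s)⁻¹ < 1 := by
  have h1 := qf_gt_one hs
  rw [inv_lt_one_iff₀]; right; exact h1

lemma qf_inv_pos {s : ℝ} (hs : 2 < s) : 0 < (qf s)⁻¹ :=
  inv_pos.mpr (lt_trans one_pos (qf_gt_one hs))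

lemma cheb_formula {s : ℝ} (hs : 2 < s) (n : ℕ) :
    chebU n s = (qf s ^ (n + 1) - (qf s)⁻¹ ^ (n + 1)) / (qf s - (qf s)⁻¹) := by
  set q := qf s with hq
  set r := q⁻¹ with hr
  have h1 : 1 < q := qf_gt_one hs
  have h2 : r < 1 := qf_inv_lt_one hs
  have hne : q - r ≠ 0 := by intro h; nlinarith
  have hq0 : q ≠ 0 := by positivity
  have hqr : q * r = 1 := mul_inv_cancel₀ hq0
  have hs' : s = q + r := (qf_add_inv hs).symm
  have key : ∀ m : ℕ, chebU m s * (q - r) = q ^ (m + 1) - r ^ (m + 1) ∧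
      chebU (m + 1) s * (q - r) = q ^ (m + 2) - r ^ (m + 2) := by
    intro m
    induction m with
    | zero =>
      constructor
      · simp [chebU]
      · show s * (q - r) = _
        rw [hs']; ring
    | succ k ih =>
      refine ⟨ih.2, ?_⟩
      have hstep : chebU (k + 1 + 1) s = s * chebU (k + 1) s - chebU k s := by
        simp only [chebU]
      rw [hstep]
      linear_combination (q + r) * ih.2 - ih.1 + (q ^ (k + 1) - r ^ (k + 1)) * hqr +
        (chebU (k + 1) s * (q - r)) * hs'
  rw [eq_div_iff hne]
  exact (key n).1

lemma cheb_lower {s : ℝ} (hs : 2 < s) (n : ℕ) : qf s ^ n ≤ chebU n s := by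
  rw [cheb_formula hs n]
  set q := qf s
  have h1 : 1 < q := qf_gt_one hs
  have h2 : q⁻¹ < 1 := qf_inv_lt_one hs
  have h3 : 0 < q⁻¹ := qf_inv_pos hs
  have hden : 0 < q - q⁻¹ := by linarith
  rw [le_div_iff₀ hden]
  have e1 : q⁻¹ ^ n ≤ q ^ n := pow_le_pow_left₀ h3.le (by linarith) n
  have e2 : q⁻¹ ^ (n + 1) ≤ q ^ n * q⁻¹ := by
    rw [pow_succ]
    exact mul_le_mul_of_nonneg_right e1 h3.le
  have e3 : q ^ n * (q - q⁻¹) = q ^ (n + 1) - q ^ n * q⁻¹ := by ring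
  linarith

lemma cheb_upper {s : ℝ} (hs : 2 < s) (n : ℕ) :
    chebU n s ≤ qf s ^ n * (1 - ((qf s)⁻¹) ^ 2)⁻¹ := by
  rw [cheb_formula hs n]
  set q := qf s
  have h1 : 1 < q := qf_gt_one hs
  have h2 : q⁻¹ < 1 := qf_inv_lt_one hs
  have h3 : 0 < q⁻¹ := qf_inv_pos hs
  have hden : 0 < q - q⁻¹ := by linarith
  have hq0 : q ≠ 0 := by positivity
  have hd2 : (1 : ℝ) - q⁻¹ ^ 2 ≠ 0 := by nlinarith
  have key : q ^ n * (1 - q⁻¹ ^ 2)⁻¹ = q ^ (n + 1) / (q - q⁻¹) := by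
    field_simp
    ring
  rw [key, div_le_div_iff₀ hden hden]
  nlinarith [pow_pos h3 (n + 1), pow_pos (lt_trans one_pos h1) (n + 1)]

lemma cheb_pos {s : ℝ} (hs : 2 < s) (n : ℕ) : 0 < chebU n s :=
  lt_of_lt_of_le (pow_pos (lt_trans one_pos (qf_gt_one hs)) n) (cheb_lower hs n)

lemma qf_ratio {t N : ℝ} (ht : 2 < t) (htN : t ≤ N) : qf t * N ≤ t * qf N := by
  have hN : 2 < N := lt_of_lt_of_le ht htN
  have h1 : 0 ≤ t ^ 2 - 4 := sq_sub_nonneg ht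
  have h2 : 0 ≤ N ^ 2 - 4 := sq_sub_nonneg hN
  have key : N * Real.sqrt (t ^ 2 - 4) ≤ t * Real.sqrt (N ^ 2 - 4) := by
    have e1 : N * Real.sqrt (t ^ 2 - 4) = Real.sqrt (N ^ 2 * (t ^ 2 - 4)) := by
      rw [Real.sqrt_mul (by positivity), Real.sqrt_sq (by linarith)]
    have e2 : t * Real.sqrt (N ^ 2 - 4) = Real.sqrt (t ^ 2 * (N ^ 2 - 4)) := by
      rw [Real.sqrt_mul (by positivity), Real.sqrt_sq (by linarith)]
    rw [e1, e2]
    apply Real.sqrt_le_sqrt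
    nlinarith
  unfold qf
  nlinarith

lemma qf_mono {t N : ℝ} (ht : 2 < t) (htN : t ≤ N) : qf t ≤ qf N := by
  have h := Real.sqrt_le_sqrt (show t ^ 2 - 4 ≤ N ^ 2 - 4 by nlinarith)
  unfold qf; linarith

theorem stmt_4 (t₀ N : ℝ) (ht₀ : 2 < t₀) (ht₀3 : t₀ < 3) (hN : 3 ≤ N) :
    0 < (1 - qf t₀ ^ (-2 : ℤ))⁻¹ ∧
    ∀ t : ℝ, t₀ ≤ t → t ≤ N → ∀ n : ℕ,
      0 < chebU n t / chebU n N ∧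
        chebU n t / chebU n N ≤ (1 - qf t₀ ^ (-2 : ℤ))⁻¹ * (t / N) ^ n := by
  have hz : qf t₀ ^ (-2 : ℤ) = ((qf t₀)⁻¹) ^ 2 := by
    rw [inv_pow, zpow_neg]
    norm_cast
  have hq0t₀ : 1 < qf t₀ := qf_gt_one ht₀
  have h01 : 0 < (qf t₀)⁻¹ := qf_inv_pos ht₀
  have h02 : (qf t₀)⁻¹ < 1 := qf_inv_lt_one ht₀
  have hC : 0 < 1 - ((qf t₀)⁻¹) ^ 2 := by nlinarith
  constructor
  · rw [hz]; positivity
  intro t ht1 ht2 n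
  have h2t : 2 < t := lt_of_lt_of_le ht₀ ht1
  have h2N : 2 < N := by linarith
  have hNt : t ≤ N := ht2
  have hqt1 : 1 < qf t := qf_gt_one h2t
  have hqN1 : 1 < qf N := qf_gt_one h2N
  have hposN : 0 < chebU n N := cheb_pos h2N n
  have hpost : 0 < chebU n t := cheb_pos h2t n
  refine ⟨div_pos hpost hposN, ?_⟩
  rw [hz]
  have h1t : 0 < (qf t)⁻¹ := qf_inv_pos h2t
  have h2tlt : (qf t)⁻¹ < 1 := qf_inv_lt_one h2t
  have hCt : 0 < 1 - ((qf t)⁻¹) ^ 2 := by nlinarith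
  have step1 : chebU n t / chebU n N ≤
      (qf t ^ n * (1 - ((qf t)⁻¹) ^ 2)⁻¹) / qf N ^ n := by
    apply div_le_div₀ (by positivity) (cheb_upper h2t n)
      (pow_pos (by linarith) n) (cheb_lower h2N n)
  have hKt : (1 - ((qf t)⁻¹) ^ 2)⁻¹ ≤ (1 - ((qf t₀)⁻¹) ^ 2)⁻¹ := by
    have hmono := qf_mono ht₀ ht1
    have hinv : (qf t)⁻¹ ≤ (qf t₀)⁻¹ := inv_anti₀ (by linarith) hmono
    have hsq : ((qf t)⁻¹) ^ 2 ≤ ((qf t₀)⁻¹) ^ 2 := by nlinarith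
    exact inv_anti₀ hC (by linarith)
  have hratio : qf t / qf N ≤ t / N := by
    rw [div_le_div_iff₀ (by linarith) (by linarith)]
    exact qf_ratio h2t hNt
  have step2 : (qf t ^ n * (1 - ((qf t)⁻¹) ^ 2)⁻¹) / qf N ^ n =
      (1 - ((qf t)⁻¹) ^ 2)⁻¹ * (qf t / qf N) ^ n := by
    rw [div_pow]; ring
  have step3 : (qf t / qf N) ^ n ≤ (t / N) ^ n :=
    pow_le_pow_left₀ (by positivity) hratio n
  calc chebU n t / chebU n N ≤ (1 - ((qf t)⁻¹) ^ 2)⁻¹ * (qf t / qf N) ^ n := by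
        rw [← step2]; exact step1
    _ ≤ (1 - ((qf t₀)⁻¹) ^ 2)⁻¹ * (t / N) ^ n := by
        apply mul_le_mul hKt step3 (by positivity) (by positivity)
end

section
/- Let N ≥ 2 be a natural number. The set of traces of real orthogonal N × N matrices is exactly the closed interval [−N, N]; that is, {tr(O) : O ∈ O(N, ℝ)} = [−N, N], where O(N, ℝ) denotes the group of N × N real matrices O with Oᵀ·O = 1. -/
open Matrix

lemma aux_trace_reindex {m : Type*} {n : Type*} [Fintype m] [Fintype n] [DecidableEq m] [DecidableEq n]
    (e : m ≃ n) (A : Matrix m m ℝ) : (reindex e e A).trace = A.trace := by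
  simp only [trace, reindex, diag, Equiv.coe_fn_mk, submatrix_apply]
  exact Fintype.sum_equiv e.symm _ _ (fun i => rfl)

lemma aux_reindex_orth {m n : Type*} [Fintype m] [Fintype n] [DecidableEq m] [DecidableEq n]
    (e : m ≃ n) (A : Matrix m m ℝ) (h : Aᵀ * A = 1) :
    (reindex e e A)ᵀ * (reindex e e A) = 1 := by
  simp only [reindex_apply, transpose_submatrix, submatrix_mul_equiv]
  rw [h]; simp

lemma aux_sum_ite (n k : ℕ) (hk : k ≤ n) :
    ∑ i : Fin n, (if (i : ℕ) < k then (-1 : ℝ) else 1) = (n : ℝ) - 2 * k := by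
  rw [Fin.sum_univ_eq_sum_range (fun i => if i < k then (-1 : ℝ) else 1)]
  rw [Finset.range_eq_Ico, ← Finset.sum_Ico_consecutive _ (Nat.zero_le k) hk]
  rw [Finset.sum_congr rfl (fun i hi => if_pos (Finset.mem_Ico.mp hi).2),
      Finset.sum_congr (rfl : Finset.Ico k n = _) (fun i hi => if_neg (by simpa using (Finset.mem_Ico.mp hi).1.not_gt))]
  simp [Nat.card_Ico]
  push_cast [Nat.cast_sub hk]
  ring

lemma aux_exists (n : ℕ) (t : ℝ) (ht : -((2+n : ℕ) : ℝ) ≤ t) (ht2 : t ≤ ((2+n : ℕ) : ℝ)) :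
    ∃ O : Matrix (Fin (2+n)) (Fin (2+n)) ℝ, O.transpose * O = 1 ∧ O.trace = t := by
  push_cast at ht ht2
  -- choose k
  set K : ℤ := ⌈((n : ℝ) - t)/2⌉ with hK
  set k : ℕ := min K.toNat n with hk
  have hkn : k ≤ n := min_le_right _ _
  have hbound : |t - ((n:ℝ) - 2*k)| ≤ 2 := by
    have h1 : ((n : ℝ) - t)/2 ≤ K := Int.le_ceil _
    have h2 : (K : ℝ) < ((n : ℝ) - t)/2 + 1 := Int.ceil_lt_add_one _
    rcases lt_or_ge K 0 with hneg | hpos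
    · have : k = 0 := by simp [hk, Int.toNat_of_nonpos hneg.le]
      rw [this, abs_le]
      have : ((n:ℝ) - t)/2 < 0 := by
        calc ((n:ℝ) - t)/2 ≤ K := h1
        _ < 0 := by exact_mod_cast hneg
      push_cast
      constructor <;> linarith
    · rcases le_or_gt K n with hKn | hKn
      · have hkK : (k : ℝ) = K := by
          have : k = K.toNat := by
            simp [hk]
            omega
          rw [this]
          exact_mod_cast Int.toNat_of_nonneg hpos
        rw [abs_le, hkK]
        constructor <;> linarith
      · have : k = n := by simp [hk]; omega
        rw [this, abs_le]
        have : (n : ℝ) < ((n : ℝ) - t)/2 := by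
          have : ((n:ℤ)) < K := hKn
          have h3 : ((n:ℝ)) + 1 ≤ K := by exact_mod_cast hKn
          linarith
        constructor <;> linarith
  set c : ℝ := (t - ((n:ℝ) - 2*k))/2 with hc
  have hc1 : c^2 ≤ 1 := by
    rw [abs_le] at hbound
    nlinarith [hbound.1, hbound.2]
  set s : ℝ := Real.sqrt (1 - c^2) with hs
  have hcs : c^2 + s^2 = 1 := by
    rw [hs, Real.sq_sqrt (by linarith)]; ring
  set A : Matrix (Fin 2) (Fin 2) ℝ := !![c, -s; s, c] with hA
  have hAorth : Aᵀ * A = 1 := by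
    ext i j
    fin_cases i <;> fin_cases j <;>
      simp [hA, Matrix.mul_apply, Fin.sum_univ_two, Matrix.vecHead, Matrix.vecTail,
        Matrix.one_apply] <;> nlinarith [hcs]
  set d : Fin n → ℝ := fun i => if (i : ℕ) < k then (-1 : ℝ) else 1 with hd
  set D : Matrix (Fin n) (Fin n) ℝ := Matrix.diagonal d with hD
  have hDorth : Dᵀ * D = 1 := by
    rw [hD, diagonal_transpose, diagonal_mul_diagonal]
    ext i j
    rcases eq_or_ne i j with rfl | hij
    · simp [hd]; split <;> norm_num
    · simp [Matrix.diagonal_apply_ne _ hij, Matrix.one_apply_ne hij]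
  refine ⟨reindex finSumFinEquiv finSumFinEquiv (fromBlocks A 0 0 D), ?_, ?_⟩
  · apply aux_reindex_orth
    rw [fromBlocks_transpose, fromBlocks_multiply]
    simp [hAorth, hDorth, ← fromBlocks_one]
  · rw [aux_trace_reindex]
    have : (fromBlocks A 0 0 D).trace = A.trace + D.trace := by
      simp [trace, Fintype.sum_sum_type, fromBlocks, diag]
    rw [this, hA, trace_fin_two_of, hD, trace_diagonal, hd, aux_sum_ite n k hkn, hc]
    ring

theorem stmt_9 (N : ℕ) (hN : 2 ≤ N) :
    {t : ℝ | ∃ O : Matrix (Fin N) (Fin N) ℝ, O.transpose * O = 1 ∧ O.trace = t} =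
      Set.Icc (-(N : ℝ)) (N : ℝ) := by
  ext t
  simp only [Set.mem_setOf_eq, Set.mem_Icc]
  constructor
  · rintro ⟨O, hO, rfl⟩
    have hdiag : ∀ i, |O i i| ≤ 1 := by
      intro i
      have h1 : (Oᵀ * O) i i = 1 := by rw [hO]; simp
      rw [Matrix.mul_apply] at h1
      have h2 : ∑ k, O k i * O k i = 1 := by
        simpa [Matrix.transpose_apply] using h1
      have h3 : (O i i)^2 ≤ 1 := by
        rw [← h2]
        have := Finset.single_le_sum (f := fun k => O k i * O k i)
          (fun k _ => mul_self_nonneg _) (Finset.mem_univ i)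
        simpa [sq] using this
      exact (sq_le_one_iff_abs_le_one _).mp h3
    have habs : |O.trace| ≤ N := by
      calc |O.trace| ≤ ∑ i, |O i i| := by
            simpa [Matrix.trace, Matrix.diag] using
              Finset.abs_sum_le_sum_abs (fun i => O i i) Finset.univ
        _ ≤ ∑ _i : Fin N, (1:ℝ) := Finset.sum_le_sum (fun i _ => hdiag i)
        _ = N := by simp
    rw [abs_le] at habs
    exact ⟨by linarith [habs.1], habs.2⟩
  · rintro ⟨h1, h2⟩
    obtain ⟨n, rfl⟩ : ∃ n, N = 2 + n := ⟨N - 2, by omega⟩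
    exact aux_exists n t (by exact_mod_cast h1) (by exact_mod_cast h2)
end
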